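/- Let ρ_{ABC} be a density operator on a tripartite finite-dimensional system such that the reduced state on AC is product: ρ_{AC} = ρ_A ⊗ ρ_C. Let D be any generalized divergence, i.e., a function on pairs of density operators that is monotone non-increasing under the simultaneous application of a quantum channel to both arguments. Then I_D(A;BC)_ρ ≤ I_D(AC;B)_ρ, where I_D(A;B)_ρ = inf_{σ_B} D(ρ_{AB} ‖ ρ_A ⊗ σ_B) with the infimum over density operators σ_B. -/

import Mathlib

open Matrix BigOperators Kronecker
open scoped Classical ComplexOrder

variable {d : Type*} [Fintype d] [DecidableEq d]

/-- Trace norm of a matrix. -/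
noncomputable def traceNorm (A : Matrix d d ℂ) : ℝ :=
  (((Matrix.posSemidef_conjTranspose_mul_self A).1.eigenvectorUnitary : Matrix d d ℂ) *
      Matrix.diagonal (fun i => ((Real.sqrt
        ((Matrix.posSemidef_conjTranspose_mul_self A).1.eigenvalues i) : ℝ) : ℂ)) *
      star ((Matrix.posSemidef_conjTranspose_mul_self A).1.eigenvectorUnitary : Matrix d d ℂ)
    ).trace.re

/-- Spectral functional calculus for a Hermitian matrix. -/
noncomputable def specFun {A : Matrix d d ℂ} (hA : A.IsHermitian) (f : ℝ → ℝ) :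
    Matrix d d ℂ :=
  (hA.eigenvectorUnitary : Matrix d d ℂ) *
    Matrix.diagonal (fun i => (f (hA.eigenvalues i) : ℂ)) *
    star (hA.eigenvectorUnitary : Matrix d d ℂ)

/-- Matrix power via functional calculus, with the convention `0 ^ s = 0` on kernels.
For `s = -1/2` this gives the square root of the Moore–Penrose inverse. -/
noncomputable def mpow (A : Matrix d d ℂ) (s : ℝ) : Matrix d d ℂ :=
  if hA : A.PosSemidef then
    specFun hA.1 (fun t => if t = 0 then 0 else t ^ s)
  else 0

/-- Base-2 matrix logarithm via functional calculus, `log 0 := 0` on kernels. -/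
noncomputable def mlog (A : Matrix d d ℂ) : Matrix d d ℂ :=
  if hA : A.PosSemidef then
    specFun hA.1 (fun t => if t = 0 then 0 else Real.logb 2 t)
  else 0

/-- Positive spectral projection `{X ≥ 0}` of a Hermitian matrix. -/
noncomputable def posProj {A : Matrix d d ℂ} (hA : A.IsHermitian) : Matrix d d ℂ :=
  specFun hA (fun t => if 0 ≤ t then 1 else 0)

/-- A density operator: positive semi-definite with unit trace. -/
def IsDensity (ρ : Matrix d d ℂ) : Prop := ρ.PosSemidef ∧ ρ.trace = 1

/-- A measurement operator: `0 ≤ Λ ≤ I`. -/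
def IsMeasOp (Λ : Matrix d d ℂ) : Prop := Λ.PosSemidef ∧ (1 - Λ).PosSemidef

/-- `n`-fold tensor power of a matrix. -/
def tpow (ρ : Matrix d d ℂ) (n : ℕ) : Matrix (Fin n → d) (Fin n → d) ℂ :=
  Matrix.of fun x y => ∏ i, ρ (x i) (y i)

/-- Partial trace over the right (second) tensor factor. -/
noncomputable def ptraceR {a b : Type*} [Fintype a] [Fintype b]
    (ρ : Matrix (a × b) (a × b) ℂ) : Matrix a a ℂ :=
  Matrix.of fun i j => ∑ k, ρ (i, k) (j, k)

/-- Partial trace over the left (first) tensor factor. -/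
noncomputable def ptraceL {a b : Type*} [Fintype a] [Fintype b]
    (ρ : Matrix (a × b) (a × b) ℂ) : Matrix b b ℂ :=
  Matrix.of fun i j => ∑ k, ρ (k, i) (k, j)

/-- Quantum relative entropy (base 2), via the `mlog` convention. -/
noncomputable def qRelEnt (ρ σ : Matrix d d ℂ) : ℝ :=
  ((ρ * (mlog ρ - mlog σ)).trace).re

/-- ε-hypothesis testing relative entropy. -/
noncomputable def DH (ε : ℝ) (ρ σ : Matrix d d ℂ) : ℝ :=
  -Real.logb 2 (sInf {x : ℝ | ∃ Λ : Matrix d d ℂ,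
    IsMeasOp Λ ∧ 1 - ε ≤ ((Λ * ρ).trace).re ∧ x = ((Λ * σ).trace).re})

/-- Petz–Rényi relative entropy of order α. -/
noncomputable def DAlpha (α : ℝ) (ρ σ : Matrix d d ℂ) : ℝ :=
  (1 / (α - 1)) * Real.logb 2 (((mpow ρ α * mpow σ (1 - α)).trace).re)

/-- Shannon entropy (bits) of a probability vector. -/
noncomputable def shannon (p : d → ℝ) : ℝ := -∑ x, p x * Real.logb 2 (p x)

/-- von Neumann entropy (bits). -/
noncomputable def vnEntropy (A : Matrix d d ℂ) : ℝ :=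
  if hA : A.IsHermitian then -∑ i, hA.eigenvalues i * Real.logb 2 (hA.eigenvalues i) else 0

/-- Collision (order-2) conditional entropy `H₂(C|S)` of a bipartite state on `s ⊗ c`. -/
noncomputable def H2cond {s c : Type*} [Fintype s] [Fintype c] [DecidableEq s] [DecidableEq c]
    (ω : Matrix (s × c) (s × c) ℂ) : ℝ :=
  -Real.logb 2 ((ω * (mpow (ptraceR ω) (-(1/2)) ⊗ₖ (1 : Matrix c c ℂ)) *
      ω * (mpow (ptraceR ω) (-(1/2)) ⊗ₖ (1 : Matrix c c ℂ))).trace).re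

/-- Regrouping of a tripartite index `A × (B × C)` as `(A × C) × B`. -/
def regroupACB (a b c : Type*) : a × b × c ≃ (a × c) × b where
  toFun := fun p => ((p.1, p.2.2), p.2.1)
  invFun := fun p => (p.1.1, (p.2, p.1.2))
  left_inv := fun _ => rfl
  right_inv := fun _ => rfl

/-- A quantum channel (CPTP map), presented by a Kraus decomposition. -/
def IsQChannel {a b : Type} [Fintype a] [Fintype b] [DecidableEq a] [DecidableEq b]
    (Φ : Matrix a a ℂ → Matrix b b ℂ) : Prop :=
  ∃ (ι : Type) (inst : Fintype ι) (K : ι → Matrix b a ℂ),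
    (∀ X, Φ X = ∑ i ∈ @Finset.univ ι inst, K i * X * (K i)ᴴ) ∧
    ∑ i ∈ @Finset.univ ι inst, (K i)ᴴ * K i = 1

/-!
For every candidate `σ_B` in `I_D(AC;B)`, the state `σ_B ⊗ ρ_C` does at least as well in
`I_D(A;BC)`: regrouping the systems is an invertible channel, and it carries `ρ_{AC} ⊗ σ_B` to
`ρ_A ⊗ (σ_B ⊗ ρ_C)` because `ρ_{AC} = ρ_A ⊗ ρ_C`.
-/

section Density

variable {a b : Type*} [Fintype a] [Fintype b]

lemma ptraceR_eq_sum_submatrix (ρ : Matrix (a × b) (a × b) ℂ) :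
    ptraceR ρ = ∑ k, ρ.submatrix (·, k) (·, k) := by
  ext i j
  simp [ptraceR, Matrix.sum_apply]

lemma ptraceL_eq_sum_submatrix (ρ : Matrix (a × b) (a × b) ℂ) :
    ptraceL ρ = ∑ k, ρ.submatrix (k, ·) (k, ·) := by
  ext i j
  simp [ptraceL, Matrix.sum_apply]

lemma trace_ptraceR (ρ : Matrix (a × b) (a × b) ℂ) : (ptraceR ρ).trace = ρ.trace := by
  simp [ptraceR, Matrix.trace, Fintype.sum_prod_type]

lemma trace_ptraceL (ρ : Matrix (a × b) (a × b) ℂ) : (ptraceL ρ).trace = ρ.trace := by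
  simp only [ptraceL, Matrix.trace, Matrix.diag, Matrix.of_apply, Fintype.sum_prod_type]
  exact Finset.sum_comm

lemma IsDensity.ptraceR {ρ : Matrix (a × b) (a × b) ℂ} (hρ : IsDensity ρ) :
    IsDensity (ptraceR ρ) := by
  refine ⟨?_, (trace_ptraceR ρ).trans hρ.2⟩
  rw [ptraceR_eq_sum_submatrix]
  exact posSemidef_sum _ fun k _ => hρ.1.submatrix _

lemma IsDensity.ptraceL {ρ : Matrix (a × b) (a × b) ℂ} (hρ : IsDensity ρ) :
    IsDensity (ptraceL ρ) := by
  refine ⟨?_, (trace_ptraceL ρ).trans hρ.2⟩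
  rw [ptraceL_eq_sum_submatrix]
  exact posSemidef_sum _ fun k _ => hρ.1.submatrix _

lemma IsDensity.kronecker {ρ : Matrix a a ℂ} {σ : Matrix b b ℂ} (hρ : IsDensity ρ)
    (hσ : IsDensity σ) : IsDensity (ρ ⊗ₖ σ) :=
  ⟨hρ.1.kronecker hσ.1, by rw [trace_kronecker, hρ.2, hσ.2, one_mul]⟩

lemma IsDensity.reindex {ρ : Matrix a a ℂ} (hρ : IsDensity ρ) (e : a ≃ b) :
    IsDensity (Matrix.reindex e e ρ) :=
  ⟨hρ.1.submatrix _, (e.symm.sum_comp fun i => ρ i i).trans hρ.2⟩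

end Density

section Channels

variable {m n : Type} [Fintype m] [Fintype n] [DecidableEq m] [DecidableEq n]

lemma isQChannel_reindex (e : m ≃ n) :
    IsQChannel (fun X : Matrix m m ℂ => Matrix.reindex e e X) := by
  refine ⟨Unit, inferInstance, fun _ => e.symm.toPEquiv.toMatrix, fun X => ?_, ?_⟩
  · ext i j
    simp [mul_apply, PEquiv.toMatrix_apply]
  · ext i j
    simp only [mul_apply, PEquiv.toMatrix_apply, conjTranspose_apply, Finset.univ_unique,
      Finset.sum_singleton]
    rw [← e.sum_comp]
    simp [one_apply, eq_comm]

lemma isQChannel_trace :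
    IsQChannel (fun X : Matrix m m ℂ => X.trace • (1 : Matrix Unit Unit ℂ)) := by
  refine ⟨m, inferInstance, fun k => single () k 1, fun X => ?_, ?_⟩
  · ext i j
    simp [trace, Matrix.sum_apply]
  · simpa using sum_single_one

end Channels

def IsGenDivergence
    (D : ∀ (α : Type) [Fintype α] [DecidableEq α], Matrix α α ℂ → Matrix α α ℂ → ℝ) : Prop :=
  ∀ (α β : Type) [Fintype α] [DecidableEq α] [Fintype β] [DecidableEq β]
    (Φ : Matrix α α ℂ → Matrix β β ℂ), IsQChannel Φ →
    ∀ ρ σ : Matrix α α ℂ, IsDensity ρ → IsDensity σ → D β (Φ ρ) (Φ σ) ≤ D α ρ σ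

noncomputable def genMutualInfo
    (D : ∀ (α : Type) [Fintype α] [DecidableEq α], Matrix α α ℂ → Matrix α α ℂ → ℝ)
    {a b : Type} [Fintype a] [Fintype b] [DecidableEq a] [DecidableEq b]
    (ρ : Matrix (a × b) (a × b) ℂ) : ℝ :=
  sInf {x : ℝ | ∃ σ : Matrix b b ℂ, IsDensity σ ∧ x = D (a × b) ρ (ptraceR ρ ⊗ₖ σ)}

section GenDivergence

variable {D : ∀ (α : Type) [Fintype α] [DecidableEq α], Matrix α α ℂ → Matrix α α ℂ → ℝ}
  {α : Type} [Fintype α] [DecidableEq α]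

/-- Tracing out everything is a channel. -/
lemma IsGenDivergence.le_apply (hD : IsGenDivergence D) {ρ σ : Matrix α α ℂ}
    (hρ : IsDensity ρ) (hσ : IsDensity σ) : D Unit 1 1 ≤ D α ρ σ := by
  simpa [hρ.2, hσ.2] using hD _ Unit _ isQChannel_trace ρ σ hρ hσ

variable {a b : Type} [Fintype a] [Fintype b] [DecidableEq a] [DecidableEq b]
  {ρ : Matrix (a × b) (a × b) ℂ}

lemma genMutualInfo_le (hD : IsGenDivergence D) (hρ : IsDensity ρ) {σ : Matrix b b ℂ}
    (hσ : IsDensity σ) : genMutualInfo D ρ ≤ D (a × b) ρ (ptraceR ρ ⊗ₖ σ) := by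
  refine csInf_le ⟨D Unit 1 1, ?_⟩ ⟨σ, hσ, rfl⟩
  rintro x ⟨τ, hτ, rfl⟩
  exact hD.le_apply hρ (hρ.ptraceR.kronecker hτ)

/-- The marginal `ρ_B` is a state, so the infimum is not the junk value `sInf ∅ = 0`. -/
lemma le_genMutualInfo (hρ : IsDensity ρ) {t : ℝ}
    (h : ∀ σ : Matrix b b ℂ, IsDensity σ → t ≤ D (a × b) ρ (ptraceR ρ ⊗ₖ σ)) :
    t ≤ genMutualInfo D ρ := by
  refine le_csInf ⟨_, ptraceL ρ, hρ.ptraceL, rfl⟩ ?_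
  rintro x ⟨σ, hσ, rfl⟩
  exact h σ hσ

end GenDivergence

lemma reindex_regroupACB_symm_kronecker {a b c : Type*} (X : Matrix a a ℂ) (Y : Matrix c c ℂ)
    (σ : Matrix b b ℂ) :
    Matrix.reindex (regroupACB a b c).symm (regroupACB a b c).symm ((X ⊗ₖ Y) ⊗ₖ σ) =
      X ⊗ₖ (σ ⊗ₖ Y) := by
  ext ⟨i, j, k⟩ ⟨i', j', k'⟩
  simp only [reindex_apply, submatrix_apply, Equiv.symm_symm, regroupACB, Equiv.coe_fn_mk,
    kroneckerMap_apply]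
  ring

/-- If `ρ_{AC} = ρ_A ⊗ ρ_C`, then for any generalized divergence `D` (monotone under
quantum channels) the generalized mutual informations satisfy
`I_D(A;BC)_ρ ≤ I_D(AC;B)_ρ`. -/
theorem genDiv_mutual_info_swap
    (D : ∀ (α : Type) [Fintype α] [DecidableEq α], Matrix α α ℂ → Matrix α α ℂ → ℝ)
    (hmono : ∀ (α β : Type) [Fintype α] [DecidableEq α] [Fintype β] [DecidableEq β]
      (Φ : Matrix α α ℂ → Matrix β β ℂ), IsQChannel Φ →
      ∀ ρ σ : Matrix α α ℂ, IsDensity ρ → IsDensity σ → D β (Φ ρ) (Φ σ) ≤ D α ρ σ)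
    (a b c : Type) [Fintype a] [Fintype b] [Fintype c]
    [DecidableEq a] [DecidableEq b] [DecidableEq c]
    (ρ : Matrix (a × b × c) (a × b × c) ℂ) (hρ : IsDensity ρ)
    (hprod : ptraceR (Matrix.reindex (regroupACB a b c) (regroupACB a b c) ρ) =
      ptraceR ρ ⊗ₖ ptraceL (ptraceL ρ)) :
    sInf {x : ℝ | ∃ σ : Matrix (b × c) (b × c) ℂ, IsDensity σ ∧
        x = D (a × b × c) ρ (ptraceR ρ ⊗ₖ σ)} ≤
      sInf {x : ℝ | ∃ σB : Matrix b b ℂ, IsDensity σB ∧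
        x = D ((a × c) × b) (Matrix.reindex (regroupACB a b c) (regroupACB a b c) ρ)
          (ptraceR (Matrix.reindex (regroupACB a b c) (regroupACB a b c) ρ) ⊗ₖ σB)} := by
  set e := regroupACB a b c
  set ρ' := Matrix.reindex e e ρ
  have hρ' : IsDensity ρ' := hρ.reindex e
  change genMutualInfo D ρ ≤ genMutualInfo D ρ'
  refine le_genMutualInfo hρ' fun σB hσB => ?_
  have hregroup : Matrix.reindex e.symm e.symm (ptraceR ρ' ⊗ₖ σB) =
      ptraceR ρ ⊗ₖ (σB ⊗ₖ ptraceL (ptraceL ρ)) := by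
    rw [hprod, reindex_regroupACB_symm_kronecker]
  have hback : Matrix.reindex e.symm e.symm ρ' = ρ := by simp [ρ']
  calc genMutualInfo D ρ ≤ D _ ρ (ptraceR ρ ⊗ₖ (σB ⊗ₖ ptraceL (ptraceL ρ))) :=
        genMutualInfo_le hmono hρ (hσB.kronecker hρ.ptraceL.ptraceL)
    _ ≤ D _ ρ' (ptraceR ρ' ⊗ₖ σB) := by
        simpa only [hback, hregroup] using hmono _ _ _ (isQChannel_reindex e.symm) ρ' _ hρ'
          (hρ'.ptraceR.kronecker hσB)
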